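/- arXiv:1806.10175 — 3 statements merged into one kernel-verified Lean document; each statement's English description precedes it below -/
import Mathlib

section
/- Let 𝓜_K ⊆ ℝ^d be a union of K-dimensional coordinate subspaces, let x ∈ 𝓜_K with x ≥ 0 entrywise, let b ∈ ℝ^d, b̂ = max{0, b}, and let x̂ be a best approximation of b̂ in 𝓜_K (i.e., x̂ ∈ 𝓜_K minimizes ‖b̂ − x̂‖₂). Then ‖x − x̂‖₂ ≤ 2‖x − b‖₂. -/
open BigOperators

noncomputable def l2 {d : ℕ} (x : Fin d → ℝ) : ℝ := Real.sqrt (∑ i, (x i) ^ 2)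

/-- The structured sparsity model: union of coordinate subspaces with supports in `F`. -/
def sparsityModel {d : ℕ} (F : Finset (Finset (Fin d))) : Set (Fin d → ℝ) :=
  {z | ∃ Ω ∈ F, ∀ i, i ∉ Ω → z i = 0}

lemma l2_eq_norm {d : ℕ} (x : Fin d → ℝ) :
    l2 x = ‖(WithLp.equiv 2 (Fin d → ℝ)).symm x‖ := by
  rw [EuclideanSpace.norm_eq, l2]
  congr 1
  apply Finset.sum_congr rfl
  intro i _
  rw [Real.norm_eq_abs, sq_abs]
  rfl

lemma l2_triangle {d : ℕ} (u v w : Fin d → ℝ) :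
    l2 (u - w) ≤ l2 (u - v) + l2 (v - w) := by
  simp only [l2_eq_norm]
  have : (WithLp.equiv 2 (Fin d → ℝ)).symm (u - w) =
      (WithLp.equiv 2 (Fin d → ℝ)).symm (u - v) + (WithLp.equiv 2 (Fin d → ℝ)).symm (v - w) := by
    ext i
    show u i - w i = (u i - v i) + (v i - w i)
    ring
  rw [this]
  exact norm_add_le _ _

lemma l2_mono {d : ℕ} (u v : Fin d → ℝ) (h : ∀ i, |u i| ≤ |v i|) : l2 u ≤ l2 v := by
  apply Real.sqrt_le_sqrt
  apply Finset.sum_le_sum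
  intro i _
  rw [← sq_abs (u i), ← sq_abs (v i)]
  exact pow_le_pow_left₀ (abs_nonneg _) (h i) 2

/-- If `x ∈ 𝓜_K` is nonnegative, `b̂ = max{0, b}`, and `x̂` is a best
approximation of `b̂` in `𝓜_K`, then `‖x - x̂‖₂ ≤ 2 ‖x - b‖₂`. -/
theorem model_pruning_bound {d K : ℕ} (F : Finset (Finset (Fin d)))
    (hF : ∀ Ω ∈ F, Ω.card = K)
    (x b : Fin d → ℝ) (hxM : x ∈ sparsityModel F) (hx : ∀ i, 0 ≤ x i)
    (bhat : Fin d → ℝ) (hbhat : ∀ i, bhat i = max 0 (b i))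
    (xhat : Fin d → ℝ) (hxhatM : xhat ∈ sparsityModel F)
    (hbest : ∀ z ∈ sparsityModel F, l2 (bhat - xhat) ≤ l2 (bhat - z)) :
    l2 (x - xhat) ≤ 2 * l2 (x - b) := by
  have hxb : l2 (x - bhat) ≤ l2 (x - b) := by
    apply l2_mono
    intro i
    simp only [Pi.sub_apply, hbhat]
    rcases le_or_gt 0 (b i) with h | h
    · rw [max_eq_right h]
    · rw [max_eq_left h.le, sub_zero]
      rw [abs_of_nonneg (hx i), abs_of_nonneg (by linarith [hx i])]
      linarith
  have hbx : l2 (bhat - xhat) ≤ l2 (bhat - x) := hbest x hxM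
  have hsymm : l2 (bhat - x) = l2 (x - bhat) := by
    unfold l2; congr 1; apply Finset.sum_congr rfl; intro i _; simp only [Pi.sub_apply]; ring
  calc l2 (x - xhat) ≤ l2 (x - bhat) + l2 (bhat - xhat) := l2_triangle x bhat xhat
    _ ≤ l2 (x - b) + l2 (x - b) := by
        apply add_le_add hxb
        calc l2 (bhat - xhat) ≤ l2 (bhat - x) := hbx
          _ = l2 (x - bhat) := hsymm
          _ ≤ l2 (x - b) := hxb
    _ = 2 * l2 (x - b) := by ring
end

section
/- Let A ∈ ℝ^{m×d} and x ∈ ℝ^d with support S = supp(x). If for every nonzero v ∈ null(A), ‖v_S‖₁ < ‖v_{S^c}‖₁, then x is the unique minimizer of ‖x'‖₁ subject to Ax' = Ax. -/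
open Matrix BigOperators

noncomputable def l1 {d : ℕ} (x : Fin d → ℝ) : ℝ := ∑ i, |x i|

/-- Nullspace property for a fixed support `S = supp(x)`: if every nonzero
`v ∈ null(A)` satisfies `‖v_S‖₁ < ‖v_{Sᶜ}‖₁`, then `x` is the unique ℓ₁ minimizer
subject to `A x' = A x`. -/
theorem nsp_implies_unique_l1_minimizer {m d : ℕ}
    (A : Matrix (Fin m) (Fin d) ℝ) (x : Fin d → ℝ)
    (S : Finset (Fin d)) (hS : ∀ i, i ∈ S ↔ x i ≠ 0)
    (hnsp : ∀ v : Fin d → ℝ, A.mulVec v = 0 → v ≠ 0 →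
      ∑ i ∈ S, |v i| < ∑ i ∈ Sᶜ, |v i|) :
    ∀ x' : Fin d → ℝ, A.mulVec x' = A.mulVec x → x' ≠ x → l1 x < l1 x' := by
  intro x' hAx hne
  set v : Fin d → ℝ := x' - x with hv
  have hAv : A.mulVec v = 0 := by
    rw [hv, Matrix.mulVec_sub, hAx, sub_self]
  have hvne : v ≠ 0 := sub_ne_zero.mpr hne
  have hkey := hnsp v hAv hvne
  have hxS : l1 x = ∑ i ∈ S, |x i| := by
    rw [l1, ← Finset.sum_add_sum_compl S]
    have : ∑ i ∈ Sᶜ, |x i| = 0 := by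
      apply Finset.sum_eq_zero
      intro i hi
      simp only [Finset.mem_compl, hS, not_not] at hi
      simp [hi]
    linarith
  have hx'split : l1 x' = ∑ i ∈ S, |x' i| + ∑ i ∈ Sᶜ, |x' i| := by
    rw [l1, ← Finset.sum_add_sum_compl S]
  have hSc : ∑ i ∈ Sᶜ, |x' i| = ∑ i ∈ Sᶜ, |v i| := by
    apply Finset.sum_congr rfl
    intro i hi
    simp only [Finset.mem_compl, hS, not_not] at hi
    simp [hv, hi]
  have hSineq : ∑ i ∈ S, (|x i| - |v i|) ≤ ∑ i ∈ S, |x' i| := by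
    apply Finset.sum_le_sum
    intro i _
    have : x' i = x i + v i := by simp [hv]
    rw [this]
    have := abs_add_le (x i + v i) (-(v i))
    simp only [add_neg_cancel_right, abs_neg] at this
    linarith
  rw [Finset.sum_sub_distrib] at hSineq
  linarith [hxS, hx'split, hSc, hSineq, hkey]
end

section
/- Suppose A ∈ ℝ^{m×d} satisfies: for every nonzero v ∈ null(A) and every index set S with |S| ≤ k, ‖v_S‖₁ < ‖v_{S^c}‖₁. Then every k-sparse vector x is the unique minimizer of ‖x'‖₁ subject to Ax' = Ax; conversely, if some nonzero v ∈ null(A) and set S with |S| ≤ k satisfy ‖v_S‖₁ ≥ ‖v_{S^c}‖₁, then there exists a k-sparse x that is not the unique ℓ₁ minimizer. -/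
open Matrix BigOperators

/-- `x` is `k`-sparse: at most `k` nonzero entries. -/
def kSparse {d : ℕ} (k : ℕ) (x : Fin d → ℝ) : Prop :=
  (Finset.univ.filter (fun i => x i ≠ 0)).card ≤ k

/-- The nullspace property of order `k` holds iff it yields uniform exact
recovery: (a) if every nonzero `v ∈ null(A)` satisfies `‖v_S‖₁ < ‖v_{Sᶜ}‖₁` for all
`|S| ≤ k`, then every `k`-sparse `x` is the unique ℓ₁ minimizer subject to `A x' = A x`;
(b) conversely, if the property fails for some nonzero `v ∈ null(A)` and some `|S| ≤ k`,
then some `k`-sparse `x` is not the unique ℓ₁ minimizer. -/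
theorem nsp_iff_uniform_recovery {m d : ℕ} (k : ℕ)
    (A : Matrix (Fin m) (Fin d) ℝ) :
    ((∀ v : Fin d → ℝ, A.mulVec v = 0 → v ≠ 0 →
        ∀ S : Finset (Fin d), S.card ≤ k → ∑ i ∈ S, |v i| < ∑ i ∈ Sᶜ, |v i|) →
      ∀ x : Fin d → ℝ, kSparse k x →
        ∀ x' : Fin d → ℝ, A.mulVec x' = A.mulVec x → x' ≠ x → l1 x < l1 x') ∧
    ((∃ v : Fin d → ℝ, A.mulVec v = 0 ∧ v ≠ 0 ∧
        ∃ S : Finset (Fin d), S.card ≤ k ∧ ∑ i ∈ Sᶜ, |v i| ≤ ∑ i ∈ S, |v i|) →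
      ∃ x : Fin d → ℝ, kSparse k x ∧
        ∃ x' : Fin d → ℝ, A.mulVec x' = A.mulVec x ∧ x' ≠ x ∧ l1 x' ≤ l1 x) := by
  constructor
  · intro hnsp x hx x' hAx hne
    set v : Fin d → ℝ := x' - x with hv
    have hAv : A.mulVec v = 0 := by
      simp [hv, Matrix.mulVec_sub, hAx]
    have hvne : v ≠ 0 := sub_ne_zero.mpr hne
    set T : Finset (Fin d) := Finset.univ.filter (fun i => x i ≠ 0) with hT
    have hkey := hnsp v hAv hvne T hx
    have hxT : ∀ i ∉ T, x i = 0 := by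
      intro i hi
      by_contra h
      exact hi (Finset.mem_filter.mpr ⟨Finset.mem_univ i, h⟩)
    have h1 : l1 x = ∑ i ∈ T, |x i| := by
      rw [l1, ← Finset.sum_add_sum_compl T]
      have : ∑ i ∈ Tᶜ, |x i| = 0 := by
        apply Finset.sum_eq_zero
        intro i hi
        rw [hxT i (Finset.mem_compl.mp hi), abs_zero]
      linarith
    have h2 : l1 x' = ∑ i ∈ T, |x' i| + ∑ i ∈ Tᶜ, |x' i| :=
      (Finset.sum_add_sum_compl T _).symm
    have h3 : ∀ i ∈ Tᶜ, |x' i| = |v i| := by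
      intro i hi
      simp [hv, hxT i (Finset.mem_compl.mp hi)]
    have h4 : ∑ i ∈ T, |x i| - ∑ i ∈ T, |v i| ≤ ∑ i ∈ T, |x' i| := by
      rw [← Finset.sum_sub_distrib]
      apply Finset.sum_le_sum
      intro i _
      have : x i = x' i - v i := by simp [hv]
      rw [this]
      have := abs_sub_abs_le_abs_sub (x' i - v i) (-v i)
      simp at this ⊢
      linarith [this]
    rw [h1, h2, Finset.sum_congr rfl h3]
    linarith
  · rintro ⟨v, hAv, hvne, S, hScard, hle⟩
    refine ⟨fun i => if i ∈ S then v i else 0, ?_, fun i => if i ∈ S then 0 else -v i, ?_, ?_, ?_⟩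
    · unfold kSparse
      calc (Finset.univ.filter (fun i => (if i ∈ S then v i else 0) ≠ 0)).card
          ≤ S.card := by
            apply Finset.card_le_card
            intro i hi
            simp only [Finset.mem_filter] at hi
            by_contra h
            simp [h] at hi
        _ ≤ k := hScard
    · have : (fun i => if i ∈ S then (0:ℝ) else -v i) =
          (fun i => if i ∈ S then v i else 0) - v := by
        funext i
        by_cases h : i ∈ S <;> simp [h]
      rw [this, Matrix.mulVec_sub, hAv, sub_zero]
    · intro h
      apply hvne
      funext i
      have := congrFun h i
      by_cases hi : i ∈ S <;> simp [hi] at this <;> simp [this]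
    · have e1 : l1 (fun i => if i ∈ S then (0:ℝ) else -v i) = ∑ i ∈ Sᶜ, |v i| := by
        rw [l1, ← Finset.sum_add_sum_compl S]
        have hA : ∑ i ∈ S, |if i ∈ S then (0:ℝ) else -v i| = 0 :=
          Finset.sum_eq_zero fun i hi => by simp [hi]
        have hB : ∑ i ∈ Sᶜ, |if i ∈ S then (0:ℝ) else -v i| = ∑ i ∈ Sᶜ, |v i| :=
          Finset.sum_congr rfl fun i hi => by simp [Finset.mem_compl.mp hi]
        rw [hA, hB]; ring
      have e2 : l1 (fun i => if i ∈ S then v i else 0) = ∑ i ∈ S, |v i| := by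
        rw [l1, ← Finset.sum_add_sum_compl S]
        have hA : ∑ i ∈ S, |if i ∈ S then v i else (0:ℝ)| = ∑ i ∈ S, |v i| :=
          Finset.sum_congr rfl fun i hi => by simp [hi]
        have hB : ∑ i ∈ Sᶜ, |if i ∈ S then v i else (0:ℝ)| = 0 :=
          Finset.sum_eq_zero fun i hi => by simp [Finset.mem_compl.mp hi]
        rw [hA, hB]; ring
      rw [e1, e2]; exact hle
end
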